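/- arXiv:2605.25126 — 2 statements merged into one kernel-verified Lean document; each statement's English description precedes it below -/
import Mathlib

section
/- An integral lattice L ⊆ ℝⁿ (n ≥ 2, full rank) satisfies |{y ∈ L : ‖y‖² = 1}| = 2n if and only if L is isometric to ℤⁿ. -/
/-!
Two unit vectors of an integral lattice have an integral inner product of absolute value at most
one, so they are equal, opposite or orthogonal. Choosing one vector from each pair `±u` of unit
vectors therefore gives an orthonormal family in `L`; when there are `2n` unit vectors it is an
orthonormal basis, and integrality of `L` says exactly that its coordinates in this basis are the
integer points. Conversely, the unit vectors of a lattice containing an orthonormal basis `B` are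
the `2n` vectors `±B i`.
-/

open scoped RealInnerProductSpace

namespace Set

theorem exists_disjoint_neg_union_neg_eq {E : Type*} [InvolutiveNeg E] (s : Set E)
    (hs : ∀ u ∈ s, -u ∈ s) (hfix : ∀ u ∈ s, -u ≠ u) : ∃ t ⊆ s, Disjoint t (-t) ∧ t ∪ -t = s := by
  -- split each pair `{u, -u}` by a well-order on `E`
  let r : E → E → Prop := WellOrderingRel
  refine ⟨{u ∈ s | r u (-u)}, fun u hu => hu.1, ?_, ?_⟩
  · refine Set.disjoint_left.2 fun u hu hu' => ?_
    exact asymm hu.2 (by simpa using hu'.2)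
  · ext u
    simp only [mem_union, mem_ofPred_eq, mem_neg, neg_neg]
    constructor
    · rintro (⟨hu, -⟩ | ⟨hu, -⟩)
      · exact hu
      · simpa using hs _ hu
    · intro hu
      rcases trichotomous_of r u (-u) with h | h | h
      · exact Or.inl ⟨hu, h⟩
      · exact absurd h.symm (hfix u hu)
      · exact Or.inr ⟨hs u hu, h⟩

end Set

section

variable {E : Type*} [NormedAddCommGroup E] [InnerProductSpace ℝ E]

theorem eq_or_eq_neg_or_inner_eq_zero_of_inner_eq_intCast {u v : E} (hu : ‖u‖ = 1)
    (hv : ‖v‖ = 1) {m : ℤ} (hm : ⟪u, v⟫ = m) : v = u ∨ v = -u ∨ ⟪u, v⟫ = 0 := by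
  have hle : |(m : ℝ)| ≤ 1 := by
    simpa [hm, hu, hv] using abs_real_inner_le_norm u v
  obtain ⟨hm₁, hm₂⟩ := abs_le.1 (show |m| ≤ 1 by exact_mod_cast hle)
  interval_cases m
  · refine Or.inr (Or.inl ?_)
    have h : ⟪u, -v⟫ = 1 := by simp [inner_neg_right, hm]
    exact neg_eq_iff_eq_neg.1 ((inner_eq_one_iff_of_norm_eq_one hu (by rwa [norm_neg])).1 h).symm
  · simp [hm]
  · exact Or.inl ((inner_eq_one_iff_of_norm_eq_one hu hv).1 (by rw [hm, Int.cast_one])).symm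

variable {ι : Type*} [Fintype ι] (L : AddSubgroup E)
  (hint : ∀ x ∈ L, ∀ y ∈ L, ∃ m : ℤ, ⟪x, y⟫ = (m : ℝ))
include hint

theorem inner_eq_zero_of_mem_of_ne_of_ne_neg {u v : E} (hu : u ∈ L ∧ ‖u‖ ^ 2 = 1)
    (hv : v ∈ L ∧ ‖v‖ ^ 2 = 1) (hvu : v ≠ u) (hvnu : v ≠ -u) : ⟪u, v⟫ = 0 := by
  obtain ⟨m, hm⟩ := hint u hu.1 v hv.1
  have hnorm {w : E} (hw : ‖w‖ ^ 2 = 1) : ‖w‖ = 1 :=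
    (pow_eq_one_iff_of_nonneg (norm_nonneg w) two_ne_zero).1 hw
  exact ((eq_or_eq_neg_or_inner_eq_zero_of_inner_eq_intCast (hnorm hu.2) (hnorm hv.2) hm
    ).resolve_left hvu).resolve_left hvnu

theorem exists_orthonormalBasis_mem_of_ncard_eq [FiniteDimensional ℝ E]
    (hι : Module.finrank ℝ E = Fintype.card ι)
    (hS : {y : E | y ∈ L ∧ ‖y‖ ^ 2 = 1}.ncard = 2 * Fintype.card ι) :
    ∃ B : OrthonormalBasis ι ℝ E, ∀ i, B i ∈ L := by
  set S := {y : E | y ∈ L ∧ ‖y‖ ^ 2 = 1}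
  have hneg : ∀ u ∈ S, -u ∈ S := fun u hu => ⟨neg_mem hu.1, by rw [norm_neg]; exact hu.2⟩
  have hfix : ∀ u ∈ S, -u ≠ u := fun u hu h => by
    have h2 : (2 : ℝ) • u = 0 := by rw [two_smul]; nth_rewrite 1 [← h]; exact neg_add_cancel u
    simpa [(smul_eq_zero.1 h2).resolve_left two_ne_zero] using hu.2
  obtain ⟨t, htS, hdisj, hunion⟩ := S.exists_disjoint_neg_union_neg_eq hneg hfix
  have hon : Orthonormal ℝ ((↑) : t → E) := by
    refine ⟨fun u => ?_, fun u v huv => ?_⟩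
    · exact (pow_eq_one_iff_of_nonneg (norm_nonneg _) two_ne_zero).1 (htS u.2).2
    · refine inner_eq_zero_of_mem_of_ne_of_ne_neg L hint (htS u.2) (htS v.2)
        (fun h => huv (Subtype.ext h).symm) fun h => ?_
      exact Set.disjoint_left.1 hdisj v.2 (by simp [h, u.2])
  have : Finite t := hon.linearIndependent.finite
  have hcard : Nat.card t = Fintype.card ι := by
    have := Set.ncard_union_eq hdisj (Set.toFinite t) (Set.toFinite t).neg
    rw [hunion, Set.ncard_neg, hS, ← Nat.card_coe_set_eq] at this
    omega
  have : Fintype t := Fintype.ofFinite t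
  let e : t ≃ ι := Fintype.equivOfCardEq (by rw [← Nat.card_eq_fintype_card, hcard])
  obtain ⟨B, hB⟩ := Orthonormal.exists_orthonormalBasis_extension_of_card_eq (s := Set.univ) hι
    ((hon.comp _ e.symm.injective).comp _ Subtype.val_injective)
  exact ⟨B, fun i => hB i trivial ▸ (htS (e.symm i).2).1⟩

theorem ncard_eq_of_orthonormalBasis_mem (B : OrthonormalBasis ι ℝ E) (hB : ∀ i, B i ∈ L) :
    {y : E | y ∈ L ∧ ‖y‖ ^ 2 = 1}.ncard = 2 * Fintype.card ι := by
  have hBS i : B i ∈ L ∧ ‖B i‖ ^ 2 = 1 := ⟨hB i, by rw [B.orthonormal.1 i, one_pow]⟩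
  have hS : {y : E | y ∈ L ∧ ‖y‖ ^ 2 = 1} = Set.range B ∪ Set.range (fun i => -B i) := by
    ext u
    refine ⟨fun hu => ?_, ?_⟩
    · by_contra hne
      simp only [Set.mem_union, Set.mem_range, not_or, not_exists] at hne
      have hu0 : u = 0 := B.repr.injective <| by
        ext i
        rw [B.repr_apply_apply, map_zero]
        exact inner_eq_zero_of_mem_of_ne_of_ne_neg L hint (hBS i) hu
          (Ne.symm (hne.1 i)) (Ne.symm (hne.2 i))
      simpa [hu0] using hu.2
    · rintro (⟨i, rfl⟩ | ⟨i, rfl⟩)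
      · exact hBS i
      · exact ⟨neg_mem (hB i), by rw [norm_neg]; exact (hBS i).2⟩
  have hdisj : Disjoint (Set.range B) (Set.range (fun i => -B i)) := by
    classical
    refine Set.disjoint_left.2 ?_
    rintro _ ⟨i, rfl⟩ ⟨j, hj⟩
    have h := orthonormal_iff_ite.1 B.orthonormal i j
    rw [← hj, inner_neg_left, real_inner_self_eq_norm_sq, B.orthonormal.1 j] at h
    split_ifs at h <;> norm_num at h
  have hinj : Function.Injective B := B.orthonormal.linearIndependent.injective
  rw [hS, Set.ncard_union_eq hdisj, Set.ncard_range_of_injective hinj,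
    Set.ncard_range_of_injective (f := fun i => -B i) (neg_injective.comp hinj),
    Nat.card_eq_fintype_card, two_mul]

theorem ncard_eq_iff_exists_orthonormalBasis_mem [FiniteDimensional ℝ E]
    (hι : Module.finrank ℝ E = Fintype.card ι) :
    {y : E | y ∈ L ∧ ‖y‖ ^ 2 = 1}.ncard = 2 * Fintype.card ι ↔
      ∃ B : OrthonormalBasis ι ℝ E, ∀ i, B i ∈ L :=
  ⟨exists_orthonormalBasis_mem_of_ncard_eq L hint hι,
    fun ⟨B, hB⟩ => ncard_eq_of_orthonormalBasis_mem L hint B hB⟩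

theorem exists_orthonormalBasis_mem_iff_exists_linearIsometryEquiv :
    (∃ B : OrthonormalBasis ι ℝ E, ∀ i, B i ∈ L) ↔
      ∃ f : E ≃ₗᵢ[ℝ] EuclideanSpace ℝ ι,
        f '' (L : Set E) = {x : EuclideanSpace ℝ ι | ∀ i, ∃ m : ℤ, x i = (m : ℝ)} := by
  classical
  constructor
  · rintro ⟨B, hB⟩
    refine ⟨B.repr, Set.ext fun z => ⟨?_, fun hz => ?_⟩⟩
    · rintro ⟨x, hx, rfl⟩ i
      simpa only [B.repr_apply_apply] using hint _ (hB i) x hx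
    · choose m hm using hz
      refine ⟨B.repr.symm z, ?_, B.repr.apply_symm_apply z⟩
      rw [← B.sum_repr_symm]
      refine L.sum_mem fun i _ => ?_
      rw [hm i, Int.cast_smul_eq_zsmul]
      exact L.zsmul_mem (hB i) (m i)
  · rintro ⟨f, hf⟩
    refine ⟨(EuclideanSpace.basisFun ι ℝ).map f.symm, fun i => ?_⟩
    have hi : EuclideanSpace.single i 1 ∈ f '' (L : Set E) := by
      rw [hf]
      intro j
      by_cases hj : j = i
      · exact ⟨1, by simp [hj]⟩
      · exact ⟨0, by simp [hj]⟩
    obtain ⟨x, hx, hxi⟩ := hi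
    simpa [← hxi] using hx

end

theorem stmt5_general (n : ℕ)
    (L : AddSubgroup (EuclideanSpace ℝ (Fin n)))
    (hint : ∀ x ∈ L, ∀ y ∈ L, ∃ m : ℤ, ⟪x, y⟫ = (m : ℝ)) :
    {y : EuclideanSpace ℝ (Fin n) | y ∈ L ∧ ‖y‖ ^ 2 = 1}.ncard = 2 * n ↔
      ∃ f : EuclideanSpace ℝ (Fin n) ≃ₗᵢ[ℝ] EuclideanSpace ℝ (Fin n),
        f '' (L : Set (EuclideanSpace ℝ (Fin n)))
          = {x : EuclideanSpace ℝ (Fin n) | ∀ i, ∃ m : ℤ, x i = (m : ℝ)} := by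
  have h := (ncard_eq_iff_exists_orthonormalBasis_mem L hint finrank_euclideanSpace).trans
    (exists_orthonormalBasis_mem_iff_exists_linearIsometryEquiv L hint)
  rwa [Fintype.card_fin] at h

theorem stmt5 (n : ℕ) (hn : 2 ≤ n)
    (L : AddSubgroup (EuclideanSpace ℝ (Fin n)))
    (hint : ∀ x ∈ L, ∀ y ∈ L, ∃ m : ℤ, ⟪x, y⟫ = (m : ℝ))
    (hfull : Submodule.span ℝ (L : Set (EuclideanSpace ℝ (Fin n))) = ⊤) :
    {y : EuclideanSpace ℝ (Fin n) | y ∈ L ∧ ‖y‖ ^ 2 = 1}.ncard = 2 * n ↔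
      ∃ f : EuclideanSpace ℝ (Fin n) ≃ₗᵢ[ℝ] EuclideanSpace ℝ (Fin n),
        f '' (L : Set (EuclideanSpace ℝ (Fin n)))
          = {x : EuclideanSpace ℝ (Fin n) | ∀ i, ∃ m : ℤ, x i = (m : ℝ)} :=
  stmt5_general n L hint
end

section
/- No full-rank integral lattice L ⊆ ℝ² with k ≥ 2 has a norm-k shell of size 4k whose normalized shell is a set of 4k unit vectors with all power sums ∑ z^m vanishing for 1 ≤ m ≤ 4k−1 (viewing S¹ ⊂ ℂ): such a configuration would be a regular 4k-gon, whose adjacent inner product cos(π/(2k)) is not in (1/k)ℤ ∩ [−1,1]. -/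
/-!
Unit complex numbers `z₁, …, zₙ` whose power sums `∑ zᵢ ^ m` vanish for `0 < m < n` also have
vanishing power sums for `-n < m < 0`, by conjugation. Hence the middle coefficients of
`∏ (X - zᵢ)` vanish, all `zᵢ ^ n` agree, and the distinct `zᵢ` form a rotated regular `n`-gon.
For `n = 4k` two adjacent vertices come from lattice vectors of norm `k` whose inner product
`k cos (π / (2k))` would have to be an integer, whereas Niven's theorem makes `cos (π / (2k))`
irrational for `k ≥ 2`.
-/

open scoped RealInnerProductSpace

open Polynomial Complex Finset ComplexConjugate

theorem eq_X_pow_add_C_of_coeff_eq_zero {R : Type*} [Semiring R] {p : R[X]} (hp : p.Monic)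
    (hp₀ : p.natDegree ≠ 0) (h : ∀ a, 0 < a → a < p.natDegree → p.coeff a = 0) :
    p = X ^ p.natDegree + C (p.coeff 0) := by
  ext a
  rw [coeff_add, coeff_X_pow, coeff_C]
  rcases Nat.lt_trichotomy a p.natDegree with ha | rfl | ha
  · rcases Nat.eq_zero_or_pos a with rfl | ha₀
    · simp [ha.ne]
    · simp [h a ha₀ ha, ha.ne, ha₀.ne']
  · simp [hp.coeff_natDegree, hp₀]
  · simp [coeff_eq_zero_of_natDegree_lt ha, ha.ne', (Nat.zero_le _).trans_lt ha |>.ne']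

section PowerSums

variable {ι : Type*} [Fintype ι]

theorem sum_zpow_eq_zero_of_sum_pow_eq_zero {z : ι → ℂ} (hz : ∀ i, ‖z i‖ = 1) {N : ℕ}
    (h : ∀ m : ℕ, 1 ≤ m → m ≤ N → ∑ i, z i ^ m = 0) {ℓ : ℤ} (hℓ : ℓ ≠ 0) (hℓN : ℓ.natAbs ≤ N) :
    ∑ i, z i ^ ℓ = 0 := by
  obtain ⟨a, rfl | rfl⟩ := Int.eq_nat_or_neg ℓ
  · simpa using h a (by omega) (by simpa using hℓN)
  · have hconj : ∀ i, z i ^ (-(a : ℤ)) = conj (z i ^ a) := fun i => by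
      rw [zpow_neg, zpow_natCast, inv_eq_conj (by rw [norm_pow, hz i, one_pow])]
    simp only [hconj, ← map_sum, h a (by omega) (by simpa using hℓN), map_zero]

variable {K : Type*} [Field K]

theorem coeff_prod_X_sub_C_eq_zero_of_sum_zpow_eq_zero [CharZero K] {z : ι → K}
    (hz : ∀ i, z i ≠ 0) (h : ∀ ℓ : ℤ, ℓ ≠ 0 → ℓ.natAbs < Fintype.card ι → ∑ i, z i ^ ℓ = 0)
    {a : ℕ} (ha₀ : 0 < a) (ha : a < Fintype.card ι) :
    (∏ i, (X - C (z i))).coeff a = 0 := by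
  set p : K[X] := ∏ i, (X - C (z i))
  set n := Fintype.card ι
  have hdeg : p.natDegree = n := natDegree_finsetProd_X_sub_C_eq_card _ _
  -- `0 = ∑ i, z i ^ (-a) * p (z i)`; summing over `i` first kills every `p.coeff j` with `j ≠ a`.
  have hshift : ∀ j ∈ range (n + 1), ∑ i, p.coeff j * z i ^ ((j : ℤ) - a) =
      if j = a then p.coeff a * n else 0 := fun j hj => by
    rw [← mul_sum]
    split_ifs with hja
    · simp [hja, n]
    · rw [h _ (by omega) (by simp at hj; omega), mul_zero]
  have hroot : ∀ i, z i ^ (-(a : ℤ)) * p.eval (z i) = 0 := fun i => by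
    rw [eval_prod, prod_eq_zero (mem_univ i) (by simp), mul_zero]
  have hexpand : ∀ i, z i ^ (-(a : ℤ)) * p.eval (z i) =
      ∑ j ∈ range (n + 1), p.coeff j * z i ^ ((j : ℤ) - a) := fun i => by
    rw [eval_eq_sum_range, hdeg, mul_sum]
    refine sum_congr rfl fun j _ => ?_
    rw [sub_eq_add_neg, zpow_add₀ (hz i), zpow_natCast]
    ring
  have key := sum_congr rfl fun i (_ : i ∈ univ) => (hexpand i).symm.trans (hroot i)
  rw [sum_comm, sum_congr rfl hshift, sum_ite_eq', if_pos (mem_range.2 (by omega)),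
    sum_const_zero] at key
  exact (mul_eq_zero.1 key).resolve_right (Nat.cast_ne_zero.2 (by omega))

theorem pow_card_eq_of_sum_zpow_eq_zero [CharZero K] {z : ι → K} (hz : ∀ i, z i ≠ 0)
    (h : ∀ ℓ : ℤ, ℓ ≠ 0 → ℓ.natAbs < Fintype.card ι → ∑ i, z i ^ ℓ = 0) (i j : ι) :
    z i ^ Fintype.card ι = z j ^ Fintype.card ι := by
  have : Nonempty ι := ⟨i⟩
  set p : K[X] := ∏ i, (X - C (z i))
  have hdeg : p.natDegree = Fintype.card ι := natDegree_finsetProd_X_sub_C_eq_card _ _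
  have hp : p = X ^ Fintype.card ι + C (p.coeff 0) := by
    refine hdeg ▸ eq_X_pow_add_C_of_coeff_eq_zero (monic_prod_X_sub_C _ _)
      (hdeg ▸ Fintype.card_ne_zero) fun a ha₀ ha => ?_
    exact coeff_prod_X_sub_C_eq_zero_of_sum_zpow_eq_zero hz h ha₀ (hdeg ▸ ha)
  have hroot : ∀ i, z i ^ Fintype.card ι = -p.coeff 0 := fun i => by
    have : p.eval (z i) = 0 := by rw [eval_prod, prod_eq_zero (mem_univ i) (by simp)]
    rw [hp, eval_add, eval_pow, eval_X, eval_C] at this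
    exact eq_neg_of_add_eq_zero_left this
  rw [hroot, hroot]

theorem exists_eq_mul_of_pow_card_eq {z : ι → K} (hinj : Function.Injective z)
    (hz : ∀ i, z i ≠ 0) (hpow : ∀ i j, z i ^ Fintype.card ι = z j ^ Fintype.card ι)
    {ζ : K} (hζ : ζ ^ Fintype.card ι = 1) (j : ι) : ∃ i, z i = ζ * z j := by
  classical
  have hn : 0 < Fintype.card ι := Fintype.card_pos_iff.2 ⟨j⟩
  -- `i ↦ z i / z j` is injective into the at most `card ι` roots of unity of order `card ι`.
  have himage : univ.image (fun i => z i / z j) = nthRootsFinset (Fintype.card ι) (1 : K) := by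
    refine eq_of_subset_of_card_le (fun w hw => ?_) ?_
    · obtain ⟨i, -, rfl⟩ := mem_image.1 hw
      rw [mem_nthRootsFinset hn, div_pow, hpow i j, div_self (pow_ne_zero _ (hz j))]
    · rw [card_image_of_injective _ fun a b hab => hinj ((div_left_inj' (hz j)).1 hab),
        card_univ, nthRootsFinset_def]
      exact (Multiset.toFinset_card_le _).trans (card_nthRoots _ _)
  obtain ⟨i, -, hi⟩ := mem_image.1 (himage ▸ (mem_nthRootsFinset hn 1).2 hζ)
  exact ⟨i, by rw [← hi, div_mul_cancel₀ _ (hz j)]⟩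

end PowerSums

section Plane

variable {k : ℝ} {x y : EuclideanSpace ℝ (Fin 2)} {u v : ℂ}

theorem coords_eq_mul_sqrt_of_eq_div_sqrt (hk : 0 < k)
    (hu : u = ((x 0 : ℝ) + (x 1 : ℝ) * I) / (Real.sqrt k : ℂ)) :
    x 0 = u.re * Real.sqrt k ∧ x 1 = u.im * Real.sqrt k := by
  have hsk : (Real.sqrt k : ℂ) ≠ 0 := by exact_mod_cast (Real.sqrt_pos.2 hk).ne'
  rw [eq_div_iff hsk] at hu
  constructor
  · simpa using congrArg re hu.symm
  · simpa using congrArg im hu.symm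

theorem norm_eq_one_of_eq_div_sqrt (hk : 0 < k) (hx : ‖x‖ ^ 2 = k)
    (hu : u = ((x 0 : ℝ) + (x 1 : ℝ) * I) / (Real.sqrt k : ℂ)) : ‖u‖ = 1 := by
  obtain ⟨h0, h1⟩ := coords_eq_mul_sqrt_of_eq_div_sqrt hk hu
  rw [EuclideanSpace.norm_sq_eq, Fin.sum_univ_two, h0, h1] at hx
  have : k * normSq u = k * 1 := by
    rw [normSq_apply]
    simp only [Real.norm_eq_abs, sq_abs, mul_pow, Real.sq_sqrt hk.le] at hx
    linarith
  rw [norm_def, mul_left_cancel₀ hk.ne' this, Real.sqrt_one]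

theorem inner_eq_mul_re_mul_conj_of_eq_div_sqrt (hk : 0 < k)
    (hu : u = ((x 0 : ℝ) + (x 1 : ℝ) * I) / (Real.sqrt k : ℂ))
    (hv : v = ((y 0 : ℝ) + (y 1 : ℝ) * I) / (Real.sqrt k : ℂ)) :
    ⟪x, y⟫ = k * (u * conj v).re := by
  obtain ⟨hx0, hx1⟩ := coords_eq_mul_sqrt_of_eq_div_sqrt hk hu
  obtain ⟨hy0, hy1⟩ := coords_eq_mul_sqrt_of_eq_div_sqrt hk hv
  rw [PiLp.inner_apply, Fin.sum_univ_two]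
  simp only [RCLike.inner_apply, conj_trivial, hx0, hx1, hy0, hy1, mul_re, conj_re, conj_im]
  linear_combination (u.re * v.re + u.im * v.im) * Real.mul_self_sqrt hk.le

end Plane

theorem natCast_mul_cos_pi_div_ne_intCast {k : ℕ} (hk : 2 ≤ k) (m : ℤ) :
    (k : ℝ) * Real.cos (Real.pi / (2 * k)) ≠ m := by
  have hirr : Irrational (Real.cos (((2 * k : ℕ) : ℚ)⁻¹ * Real.pi)) :=
    irrational_cos_rat_mul_pi (by rw [Rat.inv_natCast_den, if_neg (by omega)]; omega)
  intro h
  refine hirr ⟨m / k, ?_⟩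
  have hk0 : (k : ℝ) ≠ 0 := by positivity
  push_cast
  rw [← h, inv_mul_eq_div]
  field_simp

theorem stmt13_general (k : ℕ) (hk : 2 ≤ k)
    (L : AddSubgroup (EuclideanSpace ℝ (Fin 2)))
    (hint : ∀ x ∈ L, ∀ y ∈ L, ∃ m : ℤ, ⟪x, y⟫ = (m : ℝ))
    (z : Fin (4 * k) → ℂ) (hinj : Function.Injective z)
    (hzmem : ∀ i, ∃ y ∈ L, ‖y‖ ^ 2 = (k : ℝ) ∧
        z i = ((y 0 : ℝ) + (y 1 : ℝ) * Complex.I) / (Real.sqrt k : ℂ)) :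
    ¬ (∀ m : ℕ, 1 ≤ m → m ≤ 4 * k - 1 → ∑ i, z i ^ m = 0) := by
  intro hps
  have hk₀ : (0 : ℝ) < k := Nat.cast_pos.2 (by omega)
  have hunit : ∀ i, ‖z i‖ = 1 := fun i => by
    obtain ⟨y, -, hy, hzy⟩ := hzmem i
    exact norm_eq_one_of_eq_div_sqrt hk₀ hy hzy
  have hz₀ : ∀ i, z i ≠ 0 := fun i => norm_ne_zero_iff.1 (by simp [hunit i])
  have hpow := pow_card_eq_of_sum_zpow_eq_zero hz₀ fun ℓ hℓ hℓn =>
    sum_zpow_eq_zero_of_sum_pow_eq_zero hunit hps hℓ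
      (by simp only [Fintype.card_fin] at hℓn; omega)
  set ζ : ℂ := exp ((Real.pi / (2 * k) : ℝ) * I)
  have hζ : ζ ^ Fintype.card (Fin (4 * k)) = 1 := by
    rw [Fintype.card_fin, ← exp_nat_mul, ← exp_two_pi_mul_I]
    congr 1
    have hkC : (k : ℂ) ≠ 0 := by exact_mod_cast hk₀.ne'
    push_cast
    field_simp
    norm_num
  obtain ⟨i₁, hi₁⟩ := exists_eq_mul_of_pow_card_eq hinj hz₀ hpow hζ ⟨0, by omega⟩
  obtain ⟨y₀, hy₀L, -, hzy₀⟩ := hzmem ⟨0, by omega⟩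
  obtain ⟨y₁, hy₁L, -, hzy₁⟩ := hzmem i₁
  obtain ⟨m, hm⟩ := hint y₁ hy₁L y₀ hy₀L
  refine natCast_mul_cos_pi_div_ne_intCast hk m ?_
  rw [← hm, inner_eq_mul_re_mul_conj_of_eq_div_sqrt hk₀ hzy₁ hzy₀, hi₁, mul_assoc, mul_conj,
    normSq_eq_norm_sq, hunit, one_pow, ofReal_one, mul_one, exp_ofReal_mul_I_re]

theorem stmt13 (k : ℕ) (hk : 2 ≤ k)
    (L : AddSubgroup (EuclideanSpace ℝ (Fin 2)))
    (hint : ∀ x ∈ L, ∀ y ∈ L, ∃ m : ℤ, ⟪x, y⟫ = (m : ℝ))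
    (hfull : Submodule.span ℝ (L : Set (EuclideanSpace ℝ (Fin 2))) = ⊤)
    (z : Fin (4 * k) → ℂ) (hinj : Function.Injective z)
    (hzmem : ∀ i, ∃ y ∈ L, ‖y‖ ^ 2 = (k : ℝ) ∧
        z i = ((y 0 : ℝ) + (y 1 : ℝ) * Complex.I) / (Real.sqrt k : ℂ))
    (hzsurj : ∀ y ∈ L, ‖y‖ ^ 2 = (k : ℝ) →
        ∃ i, z i = ((y 0 : ℝ) + (y 1 : ℝ) * Complex.I) / (Real.sqrt k : ℂ)) :
    ¬ (∀ m : ℕ, 1 ≤ m → m ≤ 4 * k - 1 → ∑ i, z i ^ m = 0) :=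
  stmt13_general k hk L hint z hinj hzmem
end
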